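/- arXiv:2311.04285 — 6 statements merged into one kernel-verified Lean document; each statement's English description precedes it below -/
import Mathlib

section
/- Let V be a finite nonempty vertex type, G a simple graph on V, and G' the apex extension of G on Option V. Then G has a Hamiltonian path (i.e., there exist vertices a, b and a walk from a to b in G visiting every vertex of V exactly once) if and only if G' has a Hamiltonian path starting at the apex vertex s = none (i.e., there exists a vertex x : Option V and a walk from none to x in G' visiting every vertex of Option V exactly once). -/
open SimpleGraph

/-- The apex extension of a simple graph `G` on `V`: on `Option V`, the apex vertex `none`
is adjacent to `some v` for every `v`, and `some u` is adjacent to `some v` iff `G.Adj u v`. -/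
def apexGraph {V : Type*} (G : SimpleGraph V) : SimpleGraph (Option V) where
  Adj x y :=
    match x, y with
    | none, none => False
    | none, some _ => True
    | some _, none => True
    | some u, some v => G.Adj u v
  symm := by
    constructor
    intro x y h
    match x, y with
    | none, none => exact h
    | none, some v => trivial
    | some u, none => trivial
    | some u, some v => exact G.adj_symm h
  loopless := by
    constructor
    intro x h
    match x with
    | none => exact h
    | some u => exact G.irrefl h

def apexHom {V : Type*} (G : SimpleGraph V) : G →g apexGraph G where
  toFun := some
  map_rel' := fun h => h

lemma count_none_cons {V : Type*} [DecidableEq V] (l : List V) :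
    @List.count (Option V) instBEqOfDecidableEq none (none :: l.map some) = 1 := by
  simp [List.count_cons, List.count_eq_zero]

lemma count_map_some {V : Type*} [DecidableEq V] (v : V) (l : List V) :
    @List.count (Option V) instBEqOfDecidableEq (some v) (l.map some) =
      @List.count V instBEqOfDecidableEq v l := by
  induction l with
  | nil => simp
  | cons a t ih => simp [List.count_cons, ih]

lemma count_some_cons {V : Type*} [DecidableEq V] (v : V) (l : List V) :
    @List.count (Option V) instBEqOfDecidableEq (some v) (none :: l.map some) =
      @List.count V instBEqOfDecidableEq v l := by
  simp [List.count_cons, count_map_some]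

lemma not_mem_of_count_cons_one {α : Type*} [DecidableEq α] {a : α} {l : List α}
    (h : @List.count α instBEqOfDecidableEq a (a :: l) = 1) : a ∉ l := by
  simp [List.count_cons] at h
  simpa [← List.count_eq_zero] using h

lemma pull {V : Type*} {G : SimpleGraph V} :
    ∀ {x y : Option V} (q : (apexGraph G).Walk x y), none ∉ q.support →
      ∀ u, x = some u → ∃ (b : V) (r : G.Walk u b), r.support.map some = q.support := by
  intro x y q
  induction q with
  | nil =>
    intro _ u hx
    subst hx
    exact ⟨u, SimpleGraph.Walk.nil, rfl⟩
  | @cons a c d h q ih =>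
    intro hn u hx
    subst hx
    have hc : c ∈ q.support := q.start_mem_support
    have hcn : c ≠ none := by rintro rfl; exact hn (List.mem_cons_of_mem _ hc)
    obtain ⟨v, rfl⟩ := Option.ne_none_iff_exists'.mp hcn
    have hadj : G.Adj u v := h
    obtain ⟨b, r, hr⟩ := ih (fun hm => hn (List.mem_cons_of_mem _ hm)) v rfl
    exact ⟨b, SimpleGraph.Walk.cons hadj r, by simp [hr]⟩

theorem apex_hamiltonianPath_iff {V : Type*} [Fintype V] [DecidableEq V] [Nonempty V]
    (G : SimpleGraph V) :
    (∃ (a b : V) (p : G.Walk a b), p.IsHamiltonian) ↔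
      (∃ (x : Option V) (p' : (apexGraph G).Walk none x), p'.IsHamiltonian) := by
  constructor
  · rintro ⟨a, b, p, hp⟩
    refine ⟨some b, SimpleGraph.Walk.cons (by trivial : (apexGraph G).Adj none (some a))
      (p.map (apexHom G)), ?_⟩
    intro x
    have hsup : (p.map (apexHom G)).support = p.support.map some :=
      SimpleGraph.Walk.support_map _ _
    show @List.count (Option V) instBEqOfDecidableEq x (none :: (p.map (apexHom G)).support) = 1
    rw [hsup]
    cases x with
    | none => exact count_none_cons p.support
    | some v => exact (count_some_cons v p.support).trans (hp v)
  · rintro ⟨x, p', hp'⟩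
    cases p' with
    | nil =>
      exfalso
      obtain ⟨v⟩ := ‹Nonempty V›
      have := hp' (some v)
      simp [SimpleGraph.Walk.support_nil] at this
    | @cons _ c _ h q =>
      have hnone := hp' none
      rw [SimpleGraph.Walk.support_cons] at hnone
      have hqn : none ∉ q.support := not_mem_of_count_cons_one hnone
      have hcn : c ≠ none := fun hc => hqn (hc ▸ q.start_mem_support)
      obtain ⟨a, rfl⟩ := Option.ne_none_iff_exists'.mp hcn
      obtain ⟨b, r, hr⟩ := pull q hqn a rfl
      refine ⟨a, b, r, ?_⟩
      intro v
      have hv := hp' (some v)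
      rw [SimpleGraph.Walk.support_cons, ← hr, count_some_cons v r.support] at hv
      exact hv
end

section
/- Let Q be a positive integer and W := (Fin Q → ZMod 2). Let T be a nonempty finite set of vectors in W with 0 ∉ T, and let M be a set of vectors in W. Then the following are equivalent: (1) there exists a sequence m : Fin T.card → W with m l ∈ M for every l such that the prefix-sum map S : Fin T.card → W, S l := ∑_{n ≤ l} m n, is a bijection from Fin T.card onto T (i.e., the mapping-gate sequence resolves T with exactly one target removed at each step); (2) the label graph G on {0} ∪ T has a Hamiltonian path starting at the vertex 0, i.e., there exist a vertex x and a walk from the vertex 0 to x in G that visits every vertex of {0} ∪ T exactly once. -/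
set_option maxHeartbeats 1000000

open SimpleGraph

/-- The label graph on the vertex set `{0} ∪ T` (as a subtype of `W := Fin Q → ZMod 2`),
where `u` is adjacent to `v` iff `u ≠ v` and `u + v ∈ M`. -/
def labelGraph {Q : ℕ} (T : Finset (Fin Q → ZMod 2)) (M : Set (Fin Q → ZMod 2)) :
    SimpleGraph ({0} ∪ (T : Set (Fin Q → ZMod 2)) : Set (Fin Q → ZMod 2)) where
  Adj u v := u ≠ v ∧ (u : Fin Q → ZMod 2) + v ∈ M
  symm := by
    constructor
    rintro u v ⟨hne, hm⟩
    exact ⟨hne.symm, by rwa [add_comm]⟩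
  loopless := by
    constructor
    rintro u ⟨hne, _⟩
    exact hne rfl

private lemma exists_walk_of_chain {V : Type*} {G : SimpleGraph V} (a : V) (l : List V)
    (h : List.Chain G.Adj a l) : ∃ (b : V) (p : G.Walk a b), p.support = a :: l := by
  induction l generalizing a with
  | nil => exact ⟨a, .nil, rfl⟩
  | cons c t ih =>
    obtain ⟨hab, hc⟩ := List.chain_cons.mp h
    obtain ⟨b, p, hp⟩ := ih c hc
    exact ⟨b, .cons hab p, by simp [hp]⟩

set_option linter.deprecated false in
private lemma chain_iff_get' {α : Type*} {R : α → α → Prop} {a : α} {l : List α} :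
    List.Chain R a l ↔
      (∀ h : 0 < List.length l, R a (List.get l ⟨0, h⟩)) ∧
        ∀ (i : ℕ) (h : i < List.length l - 1),
          R (List.get l ⟨i, by omega⟩) (List.get l ⟨i + 1, by omega⟩) := by
  show List.IsChain R (a :: l) ↔ _
  constructor
  · intro h
    have := List.isChain_iff_getElem.mp h
    refine ⟨fun h0 => ?_, fun i hi => ?_⟩
    · simpa using this 0 (by simp; omega)
    · exact this (i + 1) (by simp; omega)
  · rintro ⟨h1, h2⟩
    apply List.isChain_iff_getElem.mpr
    intro i hi
    cases i with
    | zero => simpa using h1 (by simp at hi; omega)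
    | succ i => simpa using h2 i (by simp at hi; omega)

private lemma add_add_cancel_left' {Q : ℕ} (x y : Fin Q → ZMod 2) : x + (x + y) = y := by
  have h : x + x = 0 := funext fun i => CharTwo.add_self_eq_zero (x i)
  rw [← add_assoc, h, zero_add]

private lemma sum_Iic_succ2 {k : ℕ} {G : Type*} [AddCommMonoid G] (m : Fin k → G) (i : ℕ)
    (h1 : i < k) (h2 : i + 1 < k) :
    ∑ n ∈ Finset.Iic (⟨i + 1, h2⟩ : Fin k), m n
      = (∑ n ∈ Finset.Iic (⟨i, h1⟩ : Fin k), m n) + m ⟨i + 1, h2⟩ := by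
  have : Finset.Iic (⟨i + 1, h2⟩ : Fin k)
      = insert ⟨i + 1, h2⟩ (Finset.Iic (⟨i, h1⟩ : Fin k)) := by
    ext n
    simp only [Finset.mem_Iic, Finset.mem_insert, Fin.le_def, Fin.ext_iff]
    omega
  rw [this, Finset.sum_insert (by simp [Fin.le_def]), add_comm]

private lemma sum_Iic_zero {k : ℕ} {G : Type*} [AddCommMonoid G] (m : Fin k → G) (h : 0 < k) :
    ∑ n ∈ Finset.Iic (⟨0, h⟩ : Fin k), m n = m ⟨0, h⟩ := by
  have : Finset.Iic (⟨0, h⟩ : Fin k) = {⟨0, h⟩} := by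
    ext n
    simp only [Finset.mem_Iic, Finset.mem_singleton, Fin.le_def, Fin.ext_iff]
    omega
  rw [this, Finset.sum_singleton]

private lemma sum_Iic_succ {k : ℕ} {G : Type*} [AddCommMonoid G] (m : Fin k → G) (i : ℕ)
    (h : i + 1 < k) :
    ∑ n ∈ Finset.Iic (⟨i + 1, h⟩ : Fin k), m n
      = (∑ n ∈ Finset.Iic (⟨i, by omega⟩ : Fin k), m n) + m ⟨i + 1, h⟩ := by
  have : Finset.Iic (⟨i + 1, h⟩ : Fin k)
      = insert ⟨i + 1, h⟩ (Finset.Iic (⟨i, by omega⟩ : Fin k)) := by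
    ext n
    simp only [Finset.mem_Iic, Finset.mem_insert, Fin.le_def, Fin.ext_iff]
    omega
  rw [this, Finset.sum_insert (by simp [Fin.le_def]), add_comm]

private lemma exists_ham_path {V : Type*} [DecidableEq V] {G : SimpleGraph V} (a : V)
    (l : List V) (h : List.Chain G.Adj a l) (hnd : (a :: l).Nodup)
    (hcomp : ∀ w, w ∈ a :: l) : ∃ (b : V) (p : G.Walk a b), p.IsHamiltonian := by
  obtain ⟨b, p, hp⟩ := exists_walk_of_chain a l h
  refine ⟨b, p, ?_⟩
  intro w
  rw [hp]
  exact List.count_eq_one_of_mem hnd (hcomp w)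

theorem resolves_iff_hamiltonianPath {Q : ℕ} (hQ : 0 < Q)
    (T : Finset (Fin Q → ZMod 2)) (hT : T.Nonempty) (h0 : (0 : Fin Q → ZMod 2) ∉ T)
    (M : Set (Fin Q → ZMod 2)) :
    (∃ m : Fin T.card → (Fin Q → ZMod 2),
        (∀ l, m l ∈ M) ∧
        Set.BijOn (fun l => ∑ n ∈ Finset.Iic l, m n) Set.univ
          (T : Set (Fin Q → ZMod 2))) ↔
      (∃ (x : ({0} ∪ (T : Set (Fin Q → ZMod 2)) : Set (Fin Q → ZMod 2)))
          (p : (labelGraph T M).Walk ⟨0, by simp⟩ x), p.IsHamiltonian) := by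
  have addself : ∀ a : Fin Q → ZMod 2, a + a = 0 := fun a =>
    funext fun i => CharTwo.add_self_eq_zero (a i)
  have hkpos : 0 < T.card := Finset.card_pos.mpr hT
  set z0 : ({0} ∪ (T : Set (Fin Q → ZMod 2)) : Set (Fin Q → ZMod 2)) := ⟨0, by simp⟩ with hz0
  constructor
  · rintro ⟨m, hmM, hbij⟩
    set S : Fin T.card → (Fin Q → ZMod 2) := fun l => ∑ n ∈ Finset.Iic l, m n with hSdef
    have hmem : ∀ i, S i ∈ T := fun i => hbij.1 (Set.mem_univ i)
    have hSinj : Function.Injective S := fun i j hij =>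
      hbij.2.1 (Set.mem_univ i) (Set.mem_univ j) hij
    set f : Fin T.card → ({0} ∪ (T : Set (Fin Q → ZMod 2)) : Set (Fin Q → ZMod 2)) :=
      fun i => ⟨S i, Set.mem_union_right _ (hmem i)⟩ with hfdef
    have hne0 : ∀ j, z0 ≠ f j := by
      intro j he
      have hv : (0 : Fin Q → ZMod 2) = S j := congrArg Subtype.val he
      exact h0 (by rw [hv]; exact hmem j)
    have hfinj : Function.Injective f := fun a b hab =>
      hSinj (by exact congrArg Subtype.val hab)
    have hchain : List.Chain (labelGraph T M).Adj z0 (List.ofFn f) := by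
      rw [chain_iff_get']
      constructor
      · intro h
        rw [List.get_ofFn]
        have e0 : Fin.cast (List.length_ofFn (f := f)) (⟨0, h⟩ : Fin (List.ofFn f).length)
            = (⟨0, hkpos⟩ : Fin T.card) := Fin.ext rfl
        rw [e0]
        refine ⟨hne0 _, ?_⟩
        show (0 : Fin Q → ZMod 2) + S ⟨0, hkpos⟩ ∈ M
        have hs0 : S ⟨0, hkpos⟩ = m ⟨0, hkpos⟩ := sum_Iic_zero m hkpos
        rw [zero_add, hs0]
        exact hmM _
      · intro i h
        rw [List.get_ofFn, List.get_ofFn]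
        have hlen : (List.ofFn f).length = T.card := List.length_ofFn (f := f)
        have hik : i + 1 < T.card := by omega
        have e1 : Fin.cast (List.length_ofFn (f := f)) (⟨i, by omega⟩ : Fin (List.ofFn f).length)
            = (⟨i, by omega⟩ : Fin T.card) := Fin.ext rfl
        have e2 : Fin.cast (List.length_ofFn (f := f)) (⟨i + 1, by omega⟩ : Fin (List.ofFn f).length)
            = (⟨i + 1, hik⟩ : Fin T.card) := Fin.ext rfl
        rw [e1, e2]
        have hik' : i < T.card := by omega
        have hval : ∀ x : Fin T.card, (f x : Fin Q → ZMod 2) = S x := fun x => rfl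
        have hne : f ⟨i, hik'⟩ ≠ f ⟨i + 1, hik⟩ := by
          intro he
          have := hfinj he
          simp [Fin.ext_iff] at this
        have hstep : (∑ n ∈ Finset.Iic (⟨i, hik'⟩ : Fin T.card), m n)
            + (∑ n ∈ Finset.Iic (⟨i + 1, hik⟩ : Fin T.card), m n) = m ⟨i + 1, hik⟩ := by
          rw [sum_Iic_succ2 m i hik' hik]
          exact add_add_cancel_left' _ _
        have hmm : (f ⟨i, hik'⟩ : Fin Q → ZMod 2) + (f ⟨i + 1, hik⟩ : Fin Q → ZMod 2) ∈ M := by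
          rw [hval, hval]
          simp only [hSdef]
          rw [hstep]
          exact hmM _
        exact ⟨hne, hmm⟩
    have hnd : (z0 :: List.ofFn f).Nodup := by
      rw [List.nodup_cons, List.nodup_ofFn]
      refine ⟨fun hz => ?_, hfinj⟩
      rw [List.mem_ofFn] at hz
      obtain ⟨j, hj⟩ := hz
      exact hne0 j hj.symm
    have hcomp : ∀ w, w ∈ z0 :: List.ofFn f := by
      rintro ⟨w, hw⟩
      rcases hw with h | h
      · exact List.mem_cons.mpr (Or.inl (Subtype.ext (by simpa using h)))
      · obtain ⟨i, -, hi⟩ := hbij.2.2 h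
        exact List.mem_cons.mpr (Or.inr ((List.mem_ofFn' f _).mpr ⟨i, Subtype.ext hi⟩))
    exact exists_ham_path z0 (List.ofFn f) hchain hnd hcomp
  · rintro ⟨x, p, hp⟩
    have hnd : p.support.Nodup := hp.isPath.support_nodup
    have hcons : p.support = z0 :: p.support.tail := p.support_eq_cons
    have hlen : p.support.length = T.card + 1 := by
      have h1 : (p.support.map Subtype.val).Nodup := hnd.map Subtype.val_injective
      have h2 : (p.support.map Subtype.val).toFinset = insert 0 T := by
        ext w
        simp only [List.mem_toFinset, List.mem_map, Finset.mem_insert]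
        constructor
        · rintro ⟨u, hu, rfl⟩
          rcases u.2 with h | h
          · left; simpa using h
          · right; exact h
        · rintro h
          have hw : w ∈ ({0} ∪ (T : Set (Fin Q → ZMod 2)) : Set (Fin Q → ZMod 2)) := by
            rcases h with rfl | h
            · exact Or.inl rfl
            · exact Or.inr h
          exact ⟨⟨w, hw⟩, hp.mem_support _, rfl⟩
      have h3 := List.toFinset_card_of_nodup h1
      rw [h2, Finset.card_insert_of_notMem h0, List.length_map] at h3
      exact h3.symm
    set v : Fin (T.card + 1) → ({0} ∪ (T : Set (Fin Q → ZMod 2)) : Set (Fin Q → ZMod 2)) :=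
      fun i => p.support.get (Fin.cast hlen.symm i) with hvdef
    have hv0 : v 0 = z0 := by
      have h4 := List.get_of_eq hcons (Fin.cast hlen.symm 0)
      rw [hvdef]
      simp only []
      rw [h4]
      rfl
    have hvinj : Function.Injective v := by
      intro i j hij
      have := List.nodup_iff_injective_get.mp hnd hij
      have h5 : (Fin.cast hlen.symm i).val = (Fin.cast hlen.symm j).val := by rw [this]
      exact Fin.ext h5
    have hadj : ∀ i : Fin T.card, (labelGraph T M).Adj (v i.castSucc) (v i.succ) := by
      intro i
      have h2 := List.isChain_iff_getElem.mp p.isChain_adj_support i.1 (by rw [hlen]; omega)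
      exact h2
    refine ⟨fun i => (v i.castSucc : Fin Q → ZMod 2) + (v i.succ : Fin Q → ZMod 2),
      fun i => (hadj i).2, ?_⟩
    set m : Fin T.card → (Fin Q → ZMod 2) :=
      fun i => (v i.castSucc : Fin Q → ZMod 2) + (v i.succ : Fin Q → ZMod 2) with hmdef
    have hS : ∀ (j : ℕ) (hj : j < T.card),
        (∑ n ∈ Finset.Iic (⟨j, hj⟩ : Fin T.card), m n) = ↑(v (⟨j, hj⟩ : Fin T.card).succ) := by
      intro j
      induction j with
      | zero =>
        intro hj
        rw [sum_Iic_zero m hj, hmdef]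
        have hc0 : (⟨0, hj⟩ : Fin T.card).castSucc = 0 := rfl
        simp only [hc0, hv0, hz0]
        rw [zero_add]
      | succ i ih =>
        intro hj
        rw [sum_Iic_succ m i hj, ih (by omega), hmdef]
        have key : (⟨i, by omega⟩ : Fin T.card).succ = (⟨i + 1, hj⟩ : Fin T.card).castSucc :=
          Fin.ext rfl
        rw [key, ← add_assoc, addself, zero_add]
    have hS' : ∀ i : Fin T.card, (∑ n ∈ Finset.Iic i, m n) = ↑(v i.succ) := fun i => hS i.1 i.2
    have hmemT : ∀ i : Fin T.card, (v i.succ : Fin Q → ZMod 2) ∈ T := by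
      intro i
      rcases (v i.succ).2 with h | h
      · exfalso
        have hz : v i.succ = v 0 := by
          rw [hv0]
          exact Subtype.ext (by simpa using h)
        exact Fin.succ_ne_zero i (hvinj hz)
      · exact h
    refine ⟨fun i _ => ?_, fun i _ j _ hij => ?_, fun t ht => ?_⟩
    · show (∑ n ∈ Finset.Iic i, m n) ∈ (T : Set (Fin Q → ZMod 2))
      rw [hS' i]
      exact hmemT i
    · simp only [hS' i, hS' j] at hij
      exact Fin.succ_injective _ (hvinj (Subtype.ext hij))
    · have hmemw : (⟨t, Or.inr ht⟩ : ({0} ∪ (T : Set (Fin Q → ZMod 2)) :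
          Set (Fin Q → ZMod 2))) ∈ p.support := hp.mem_support _
      obtain ⟨idx, hidx⟩ := List.mem_iff_get.mp hmemw
      set j : Fin (T.card + 1) := Fin.cast hlen idx with hjdef
      have hvj : v j = ⟨t, Or.inr ht⟩ := hidx
      have hj0 : j ≠ 0 := by
        intro h
        rw [h, hv0] at hvj
        have : (0 : Fin Q → ZMod 2) = t := congrArg Subtype.val hvj
        exact h0 (this ▸ ht)
      obtain ⟨i, hi⟩ := Fin.exists_succ_eq.mpr hj0
      refine ⟨i, Set.mem_univ i, ?_⟩
      have h5 := hS' i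
      rw [hi, hvj] at h5
      exact h5
end

section
/- Let Q be a positive integer and W := (Fin Q → ZMod 2). Let T be a nonempty finite set of vectors in W with 0 ∉ T, and let M be a set of vectors in W. Suppose there exists a sequence m : Fin T.card → W with m l ∈ M for every l such that the prefix-sum map S : Fin T.card → W, S l := ∑_{n ≤ l} m n, is a bijection from Fin T.card onto T. Then the label graph G on {0} ∪ T has a Hamiltonian path starting at the vertex 0: there exist a vertex x and a walk from the vertex 0 to x in G that visits every vertex of {0} ∪ T exactly once. -/
open SimpleGraph

/-- Build a walk along a chain of adjacent vertices. -/
def walkOfChain {V : Type*} (G : SimpleGraph V) (f : ℕ → V) :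
    ∀ n, (∀ i < n, G.Adj (f i) (f (i+1))) → G.Walk (f 0) (f n)
  | 0, _ => SimpleGraph.Walk.nil
  | n+1, h => (walkOfChain G f n (fun i hi => h i (by omega))).concat (h n (by omega))

lemma support_walkOfChain {V : Type*} (G : SimpleGraph V) (f : ℕ → V) :
    ∀ n (h : ∀ i < n, G.Adj (f i) (f (i+1))),
      (walkOfChain G f n h).support = (List.range (n+1)).map f
  | 0, _ => by simp [walkOfChain, List.range_succ]
  | n+1, h => by
    rw [walkOfChain, SimpleGraph.Walk.support_concat, support_walkOfChain G f n,
      List.range_succ (n := n+1)]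
    simp

theorem hamiltonianPath_of_resolves {Q : ℕ} (hQ : 0 < Q)
    (T : Finset (Fin Q → ZMod 2)) (hT : T.Nonempty) (h0 : (0 : Fin Q → ZMod 2) ∉ T)
    (M : Set (Fin Q → ZMod 2))
    (h : ∃ m : Fin T.card → (Fin Q → ZMod 2),
        (∀ l, m l ∈ M) ∧
        Set.BijOn (fun l => ∑ n ∈ Finset.Iic l, m n) Set.univ
          (T : Set (Fin Q → ZMod 2))) :
    ∃ (x : ({0} ∪ (T : Set (Fin Q → ZMod 2)) : Set (Fin Q → ZMod 2)))
        (p : (labelGraph T M).Walk ⟨0, by simp⟩ x), p.IsHamiltonian := by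
  classical
  obtain ⟨m, hM, hbij⟩ := h
  have hkpos : 0 < T.card := Finset.card_pos.mpr hT
  set S : Fin T.card → (Fin Q → ZMod 2) := fun l => ∑ n ∈ Finset.Iic l, m n with hS
  have hST : ∀ l, S l ∈ T := fun l => hbij.mapsTo (Set.mem_univ l)
  have hSinj : Function.Injective S := fun a b hab =>
    hbij.injOn (Set.mem_univ a) (Set.mem_univ b) hab
  have hstep : ∀ j : ℕ, (hj : j + 1 < T.card) →
      S ⟨j+1, hj⟩ = S ⟨j, by omega⟩ + m ⟨j+1, hj⟩ := by
    intro j hj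
    have hins : Finset.Iic (⟨j+1, hj⟩ : Fin T.card) =
        insert ⟨j+1, hj⟩ (Finset.Iic (⟨j, by omega⟩ : Fin T.card)) := by
      ext x
      simp only [Finset.mem_Iic, Finset.mem_insert, Fin.le_def, Fin.ext_iff]
      omega
    have hnotmem : (⟨j+1, hj⟩ : Fin T.card) ∉ Finset.Iic (⟨j, by omega⟩ : Fin T.card) := by
      simp [Fin.le_def]
    rw [hS]
    simp only
    rw [hins, Finset.sum_insert hnotmem, add_comm]
  have hchar : ∀ a : Fin Q → ZMod 2, a + a = 0 := by
    intro a; funext x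
    simp only [Pi.add_apply, Pi.zero_apply]
    exact CharTwo.add_self_eq_zero _
  set g : ℕ → (Fin Q → ZMod 2) := fun i =>
    if hi : i = 0 then 0 else S ⟨min (i-1) (T.card-1), by omega⟩ with hg
  have hgmem : ∀ i, g i ∈ ({0} ∪ (T : Set (Fin Q → ZMod 2)) : Set (Fin Q → ZMod 2)) := by
    intro i
    by_cases hi : i = 0
    · simp [hg, hi]
    · right
      simp only [hg, dif_neg hi]
      exact hST _
  set f : ℕ → ({0} ∪ (T : Set (Fin Q → ZMod 2)) : Set (Fin Q → ZMod 2)) :=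
    fun i => ⟨g i, hgmem i⟩ with hf
  have hg0 : g 0 = 0 := by simp [hg]
  have hgsucc : ∀ i : ℕ, (hi : i < T.card) → g (i+1) = S ⟨i, hi⟩ := by
    intro i hi
    have h1 : g (i+1) = S ⟨min (i+1-1) (T.card-1), by omega⟩ :=
      dif_neg (by omega : ¬ (i+1 = 0))
    rw [h1]
    exact congrArg S (Fin.ext (show min (i+1-1) (T.card-1) = i by omega))
  have hadj : ∀ i < T.card, (labelGraph T M).Adj (f i) (f (i+1)) := by
    intro i hi
    constructor
    · intro hEq
      have hEq' : g i = g (i+1) := congrArg Subtype.val hEq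
      rcases Nat.eq_zero_or_pos i with h0i | h0i
      · subst h0i
        rw [hg0, hgsucc 0 hi] at hEq'
        exact h0 (hEq' ▸ hST _)
      · obtain ⟨j, rfl⟩ := Nat.exists_eq_succ_of_ne_zero (by omega : i ≠ 0)
        rw [hgsucc j (by omega), hgsucc (j+1) hi] at hEq'
        have := hSinj hEq'
        simp [Fin.ext_iff] at this
    · show g i + g (i+1) ∈ M
      rcases Nat.eq_zero_or_pos i with h0i | h0i
      · subst h0i
        rw [hg0, hgsucc 0 hi, zero_add]
        have : S ⟨0, hi⟩ = m ⟨0, hi⟩ := by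
          rw [hS]
          simp only
          rw [show Finset.Iic (⟨0, hi⟩ : Fin T.card) = {⟨0, hi⟩} by
            ext x; simp only [Finset.mem_Iic, Finset.mem_singleton, Fin.le_def, Fin.ext_iff]; omega]
          simp
        rw [this]; exact hM _
      · obtain ⟨j, rfl⟩ := Nat.exists_eq_succ_of_ne_zero (by omega : i ≠ 0)
        rw [hgsucc j (by omega), hgsucc (j+1) hi, hstep j hi, ← add_assoc, hchar, zero_add]
        exact hM _
  refine ⟨f T.card, walkOfChain _ f T.card hadj, ?_⟩
  have hp : (walkOfChain (labelGraph T M) f T.card hadj).support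
      = (List.range (T.card+1)).map f := support_walkOfChain _ f T.card hadj
  have hfinj : ∀ a ∈ List.range (T.card+1), ∀ b ∈ List.range (T.card+1), f a = f b → a = b := by
    intro a ha b hb hEq
    simp only [List.mem_range] at ha hb
    have hEq' : g a = g b := congrArg Subtype.val hEq
    rcases Nat.eq_zero_or_pos a with h0a | h0a <;> rcases Nat.eq_zero_or_pos b with h0b | h0b
    · omega
    · exfalso
      obtain ⟨j, rfl⟩ := Nat.exists_eq_succ_of_ne_zero (by omega : b ≠ 0)
      rw [h0a, hg0, hgsucc j (by omega)] at hEq'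
      exact h0 (hEq' ▸ hST _)
    · exfalso
      obtain ⟨j, rfl⟩ := Nat.exists_eq_succ_of_ne_zero (by omega : a ≠ 0)
      rw [h0b, hg0, hgsucc j (by omega)] at hEq'
      exact h0 (hEq'.symm ▸ hST _)
    · obtain ⟨j, rfl⟩ := Nat.exists_eq_succ_of_ne_zero (by omega : a ≠ 0)
      obtain ⟨j', rfl⟩ := Nat.exists_eq_succ_of_ne_zero (by omega : b ≠ 0)
      rw [hgsucc j (by omega), hgsucc j' (by omega)] at hEq'
      have := hSinj hEq'
      simp only [Fin.mk.injEq] at this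
      omega
  have hpath : (walkOfChain (labelGraph T M) f T.card hadj).IsPath := by
    apply SimpleGraph.Walk.IsPath.mk'
    rw [hp]
    exact List.Nodup.map_on hfinj List.nodup_range
  apply hpath.isHamiltonian_of_mem
  intro w
  rw [hp, List.mem_map]
  obtain ⟨wv, hw⟩ := w
  rcases hw with hw0 | hwT
  · exact ⟨0, by simp, Subtype.ext (by simpa [hf, hg0] using hw0.symm)⟩
  · obtain ⟨l, -, hl⟩ := hbij.surjOn hwT
    exact ⟨l.1 + 1, by simp only [List.mem_range]; omega,
      Subtype.ext (by rw [hf]; simp only; rw [hgsucc l.1 l.2]; simpa using hl)⟩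
end

section
/- Let Q be a positive integer and W := (Fin Q → ZMod 2). Let T be a nonempty finite set of vectors in W with 0 ∉ T, and let M be a set of vectors in W. Suppose the label graph G on {0} ∪ T has a Hamiltonian path starting at the vertex 0, i.e., there exist a vertex x and a walk from the vertex 0 to x in G that visits every vertex of {0} ∪ T exactly once. Then there exists a sequence m : Fin T.card → W with m l ∈ M for every l such that the prefix-sum map S : Fin T.card → W, S l := ∑_{n ≤ l} m n, is a bijection from Fin T.card onto T. -/
open SimpleGraph

lemma walk_support_get {V : Type*} {G : SimpleGraph V} {u v : V} (p : G.Walk u v) :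
    ∀ (i : ℕ) (h : i < p.support.length), p.support.get ⟨i, h⟩ = p.getVert i := by
  induction p with
  | nil => intro i h; simp at h; subst h; rfl
  | cons hadj q ih =>
    intro i h
    cases i with
    | zero => rfl
    | succ j =>
      simp only [SimpleGraph.Walk.support_cons] at h ⊢
      simpa [SimpleGraph.Walk.getVert_cons_succ] using ih j (by simpa using h)

lemma getVert_injOn {V : Type*} {G : SimpleGraph V} {u v : V} {p : G.Walk u v}
    (hp : p.IsPath) : ∀ i ≤ p.length, ∀ j ≤ p.length,
      p.getVert i = p.getVert j → i = j := by
  intro i hi j hj hij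
  have hi' : i < p.support.length := by rw [SimpleGraph.Walk.length_support]; omega
  have hj' : j < p.support.length := by rw [SimpleGraph.Walk.length_support]; omega
  have := (List.nodup_iff_injective_get.mp hp.support_nodup)
    (show p.support.get ⟨i, hi'⟩ = p.support.get ⟨j, hj'⟩ by
      rw [walk_support_get, walk_support_get]; exact hij)
  simpa using congrArg Fin.val this

theorem resolves_of_hamiltonianPath {Q : ℕ} (hQ : 0 < Q)
    (T : Finset (Fin Q → ZMod 2)) (hT : T.Nonempty) (h0 : (0 : Fin Q → ZMod 2) ∉ T)
    (M : Set (Fin Q → ZMod 2))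
    (h : ∃ (x : ({0} ∪ (T : Set (Fin Q → ZMod 2)) : Set (Fin Q → ZMod 2)))
        (p : (labelGraph T M).Walk ⟨0, by simp⟩ x), p.IsHamiltonian) :
    ∃ m : Fin T.card → (Fin Q → ZMod 2),
      (∀ l, m l ∈ M) ∧
      Set.BijOn (fun l => ∑ n ∈ Finset.Iic l, m n) Set.univ
        (T : Set (Fin Q → ZMod 2)) := by
  classical
  obtain ⟨x, p, hp⟩ := h
  have hpath := hp.isPath
  -- cardinality of the vertex set
  have hcard : Fintype.card ({0} ∪ (T : Set (Fin Q → ZMod 2)) : Set (Fin Q → ZMod 2))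
      = T.card + 1 := by
    rw [← Set.toFinset_card]
    have : ({0} ∪ (T : Set (Fin Q → ZMod 2))).toFinset = insert 0 T := by
      ext w; rw [Set.mem_toFinset]; simp
    rw [this, Finset.card_insert_of_notMem h0]
  have hlen : p.length = T.card := by
    rw [hp.length_eq, hcard]; omega
  -- the vertex sequence
  set g : ℕ → (Fin Q → ZMod 2) := fun i => (p.getVert i : Fin Q → ZMod 2) with hg
  have hg0 : g 0 = 0 := by
    simp only [hg]; rw [SimpleGraph.Walk.getVert_zero]
  have hgmem : ∀ i, g i ∈ ({0} ∪ (T : Set (Fin Q → ZMod 2)) : Set (Fin Q → ZMod 2)) :=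
    fun i => (p.getVert i).2
  have hginj : ∀ i ≤ p.length, ∀ j ≤ p.length, g i = g j → i = j := by
    intro i hi j hj hij
    exact getVert_injOn hpath i hi j hj (Subtype.ext hij)
  have hadj : ∀ i < T.card, g i + g (i + 1) ∈ M := by
    intro i hi
    have := p.adj_getVert_succ (i := i) (by omega)
    exact this.2
  refine ⟨fun l => g l + g (l + 1), fun l => hadj l l.2, ?_⟩
  -- the prefix sums telescope
  have haddself : ∀ w : Fin Q → ZMod 2, w + w = 0 := by
    intro w; funext i
    exact CharTwo.add_self_eq_zero _
  have hsum : ∀ (j : ℕ) (hj : j < T.card),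
      ∑ n ∈ Finset.Iic (⟨j, hj⟩ : Fin T.card), (g n + g (n + 1)) = g (j + 1) := by
    intro j
    induction j with
    | zero =>
      intro hj
      have : Finset.Iic (⟨0, hj⟩ : Fin T.card) = {⟨0, hj⟩} := by
        ext a; simp [Fin.le_def, Fin.ext_iff]
      rw [this, Finset.sum_singleton]
      simp [hg0]
    | succ k ih =>
      intro hj
      have hk : k < T.card := by omega
      have hins : Finset.Iic (⟨k + 1, hj⟩ : Fin T.card)
          = insert ⟨k + 1, hj⟩ (Finset.Iic (⟨k, hk⟩ : Fin T.card)) := by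
        ext a; simp [Fin.le_def, Fin.ext_iff]; omega
      rw [hins, Finset.sum_insert (by simp [Fin.le_def]), ih hk]
      show g (k+1) + g (k+2) + g (k+1) = g (k+2)
      rw [add_comm (g (k+1)) (g (k+2)), add_assoc, haddself, add_zero]
  have hfun : ∀ l : Fin T.card,
      (∑ n ∈ Finset.Iic l, (g n + g (n + 1))) = g (l.val + 1) := by
    intro l
    have := hsum l.val l.2
    simpa using this
  have hfeq : (fun l : Fin T.card =>
      ∑ n ∈ Finset.Iic l, ((fun l : Fin T.card => g ↑l + g (↑l + 1)) n))
      = fun l : Fin T.card => g (↑l + 1) := funext fun l => hfun l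
  rw [hfeq]
  have hmemT : ∀ l : Fin T.card, g (l.val + 1) ∈ (T : Set (Fin Q → ZMod 2)) := by
    intro l
    rcases hgmem (l.val + 1) with h1 | h2
    · exfalso
      have : (l.val + 1) = 0 := hginj _ (by omega) 0 (by omega) (by rw [hg0]; exact h1)
      omega
    · exact h2
  constructor
  · intro l _
    exact hmemT l
  constructor
  · intro a _ b _ hab
    have := hginj _ (by have := a.2; omega) _ (by have := b.2; omega) hab
    exact Fin.ext (by omega)
  · intro t ht
    have htv : (⟨t, Or.inr ht⟩ : ({0} ∪ (T : Set (Fin Q → ZMod 2)) :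
        Set (Fin Q → ZMod 2))) ∈ p.support := by
      have := hp ⟨t, Or.inr ht⟩
      exact hp.mem_support _
    obtain ⟨n, hn1, hn2⟩ := SimpleGraph.Walk.mem_support_iff_exists_getVert.mp htv
    have hgn : g n = t := congrArg Subtype.val hn1
    have hn0 : n ≠ 0 := by
      intro hn
      subst hn
      rw [hg0] at hgn
      exact h0 (hgn ▸ ht)
    obtain ⟨k, rfl⟩ : ∃ k, n = k + 1 := ⟨n - 1, by omega⟩
    have hk : k < T.card := by omega
    exact ⟨⟨k, hk⟩, Set.mem_univ _, hgn⟩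
end

section
/- Let n be a positive integer and A, B, U : Matrix (Fin n) (Fin n) ℂ with U invertible (IsUnit U). Then U * exp((α : ℂ) • (Complex.I • A)) * U⁻¹ = exp((α : ℂ) • (Complex.I • B)) holds for every real number α if and only if U * A * U⁻¹ = B. (In particular, a mapping unitary conjugates the exponential exp(iαA) to exp(iαB) for all evolution parameters α exactly when it conjugates the generator A to the generator B.) -/
open Matrix NormedSpace

attribute [local instance] Matrix.linftyOpNormedRing Matrix.linftyOpNormedAlgebra

theorem conj_exp_iff_conj (n : ℕ) (hn : 0 < n) (A B U : Matrix (Fin n) (Fin n) ℂ)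
    (hU : IsUnit U) :
    (∀ α : ℝ, U * exp ((α : ℂ) • (Complex.I • A)) * U⁻¹ =
        exp ((α : ℂ) • (Complex.I • B))) ↔ U * A * U⁻¹ = B := by
  constructor
  · intro h
    have key : ∀ M : Matrix (Fin n) (Fin n) ℂ,
        HasDerivAt (fun α : ℝ => exp ((α : ℂ) • (Complex.I • M))) (Complex.I • M) 0 := by
      intro M
      have : HasDerivAt (fun α : ℝ => exp (α • (Complex.I • M)))
          (exp ((0:ℝ) • (Complex.I • M)) * (Complex.I • M)) 0 :=
        hasDerivAt_exp_smul_const (Complex.I • M) 0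
      simpa [Complex.coe_smul, zero_smul, exp_zero] using this
    have hA : HasDerivAt (fun α : ℝ => U * exp ((α : ℂ) • (Complex.I • A)) * U⁻¹)
        (U * (Complex.I • A) * U⁻¹) 0 := by
      have hA' := (((key A).const_mul U).mul_const U⁻¹)
      simp at hA' ⊢
      exact hA'
    have hB := key B
    have heq : (fun α : ℝ => U * exp ((α : ℂ) • (Complex.I • A)) * U⁻¹)
        = fun α : ℝ => exp ((α : ℂ) • (Complex.I • B)) := funext h
    rw [heq] at hA
    have := hA.unique hB
    have h2 : Complex.I • (U * A * U⁻¹) = Complex.I • B := by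
      rw [← this]
      simp [Matrix.mul_smul, Matrix.smul_mul]
    exact smul_right_injective _ Complex.I_ne_zero h2
  · intro h α
    rw [← h]
    have : (α : ℂ) • (Complex.I • (U * A * U⁻¹)) = U * ((α : ℂ) • (Complex.I • A)) * U⁻¹ := by
      simp [Matrix.mul_smul, Matrix.smul_mul]
    rw [this]
    exact (Matrix.exp_conj U _ hU).symm
end

section
/- For every positive integer Q, all labels a, t : Fin Q → ZMod 2, and every θ : ℂ, conjugating the exponential of a Pauli string by a mapping gate yields the exponential of the XOR-shifted Pauli string: Hstr a * exp(θ • (Complex.I • Pstr t)) * Hstr a = exp(θ • (Complex.I • Pstr (t + a))), where exp is the matrix exponential. -/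
open Matrix

/-- The single-qubit Hadamard gate. -/
noncomputable def Hgate : Matrix (Fin 2) (Fin 2) ℂ :=
  (Real.sqrt 2 : ℂ)⁻¹ • !![1, 1; 1, -1]

/-- The single-qubit Pauli X gate. -/
def Xgate : Matrix (Fin 2) (Fin 2) ℂ := !![0, 1; 1, 0]

/-- The single-qubit Pauli Z gate. -/
def Zgate : Matrix (Fin 2) (Fin 2) ℂ := !![1, 0; 0, -1]

/-- The `Q`-fold Kronecker product applying a Hadamard on each qubit `i` with `a i = 1`
and the identity elsewhere. -/
noncomputable def Hstr {Q : ℕ} (a : Fin Q → ZMod 2) :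
    Matrix (Fin Q → Fin 2) (Fin Q → Fin 2) ℂ :=
  fun x y => ∏ i, (if a i = 1 then Hgate else 1) (x i) (y i)

/-- The `Q`-fold Kronecker product Pauli string with `X` on each qubit `i` with `t i = 1`
and `Z` elsewhere. -/
noncomputable def Pstr {Q : ℕ} (t : Fin Q → ZMod 2) :
    Matrix (Fin Q → Fin 2) (Fin Q → Fin 2) ℂ :=
  fun x y => ∏ i, (if t i = 1 then Xgate else Zgate) (x i) (y i)


lemma sqrt2_sq : ((Real.sqrt 2 : ℂ))⁻¹ * ((Real.sqrt 2 : ℂ))⁻¹ = 2⁻¹ := by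
  rw [← mul_inv]
  norm_cast
  rw [Real.mul_self_sqrt (by norm_num)]
  norm_num

lemma Hgate_mul_Hgate : Hgate * Hgate = 1 := by
  ext i j
  simp only [Hgate, Matrix.smul_mul, Matrix.mul_smul, smul_smul, sqrt2_sq]
  fin_cases i <;> fin_cases j <;>
    simp [Matrix.mul_apply, Fin.sum_univ_two, Matrix.one_apply] <;> ring

lemma HXH : Hgate * Xgate * Hgate = Zgate := by
  ext i j
  simp only [Hgate, Xgate, Zgate, Matrix.smul_mul, Matrix.mul_smul, smul_smul, sqrt2_sq]
  fin_cases i <;> fin_cases j <;>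
    simp [Matrix.mul_apply, Fin.sum_univ_two] <;> ring

lemma HZH : Hgate * Zgate * Hgate = Xgate := by
  ext i j
  simp only [Hgate, Xgate, Zgate, Matrix.smul_mul, Matrix.mul_smul, smul_smul, sqrt2_sq]
  fin_cases i <;> fin_cases j <;>
    simp [Matrix.mul_apply, Fin.sum_univ_two] <;> ring

lemma kron_mul {Q : ℕ} (M N : Fin Q → Matrix (Fin 2) (Fin 2) ℂ) :
    (Matrix.of fun x y : Fin Q → Fin 2 => ∏ i, M i (x i) (y i)) *
      (Matrix.of fun x y : Fin Q → Fin 2 => ∏ i, N i (x i) (y i)) =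
      Matrix.of fun x y : Fin Q → Fin 2 => ∏ i, (M i * N i) (x i) (y i) := by
  ext x y
  simp only [Matrix.mul_apply, Matrix.of_apply]
  simp only [← Finset.prod_mul_distrib]
  rw [Finset.prod_univ_sum]
  simp

lemma zmod2_cases (z : ZMod 2) : z = 0 ∨ z = 1 := by revert z; decide

lemma Hstr_eq {Q : ℕ} (a : Fin Q → ZMod 2) :
    Hstr a = Matrix.of fun x y : Fin Q → Fin 2 =>
      ∏ i, (if a i = 1 then Hgate else 1) (x i) (y i) := rfl

lemma Pstr_eq {Q : ℕ} (t : Fin Q → ZMod 2) :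
    Pstr t = Matrix.of fun x y : Fin Q → Fin 2 =>
      ∏ i, (if t i = 1 then Xgate else Zgate) (x i) (y i) := rfl

lemma kron_one {Q : ℕ} :
    (Matrix.of fun x y : Fin Q → Fin 2 =>
      ∏ i, (1 : Matrix (Fin 2) (Fin 2) ℂ) (x i) (y i)) = 1 := by
  ext x y
  by_cases h : x = y
  · subst h; simp [Matrix.one_apply]
  · obtain ⟨i, hi⟩ := Function.ne_iff.mp h
    simp only [Matrix.of_apply, Matrix.one_apply, h, if_false]
    exact Finset.prod_eq_zero (Finset.mem_univ i) (by simp [Matrix.one_apply, hi])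

lemma Hstr_mul_Hstr {Q : ℕ} (a : Fin Q → ZMod 2) : Hstr a * Hstr a = 1 := by
  rw [Hstr_eq, kron_mul, ← kron_one]
  congr 1
  funext x y
  refine Finset.prod_congr rfl fun i _ => ?_
  by_cases h : a i = 1 <;> simp [h, Hgate_mul_Hgate]

lemma Hstr_conj_Pstr {Q : ℕ} (a t : Fin Q → ZMod 2) :
    Hstr a * Pstr t * Hstr a = Pstr (t + a) := by
  rw [Hstr_eq, Pstr_eq, kron_mul, kron_mul, Pstr_eq (t + a)]
  congr 1
  funext x y
  refine Finset.prod_congr rfl fun i _ => ?_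
  have ht := zmod2_cases (t i)
  have ha := zmod2_cases (a i)
  have hta : (t + a) i = t i + a i := rfl
  rcases ht with ht | ht <;> rcases ha with ha | ha <;>
    simp [ht, ha, hta, HXH, HZH]

open NormedSpace in
theorem Hstr_conj_exp_Pstr {Q : ℕ} (hQ : 0 < Q) (a t : Fin Q → ZMod 2) (θ : ℂ) :
    Hstr a * exp (θ • (Complex.I • Pstr t)) * Hstr a =
      exp (θ • (Complex.I • Pstr (t + a))) := by
  have hu : IsUnit (Hstr a) := ⟨⟨Hstr a, Hstr a, Hstr_mul_Hstr a, Hstr_mul_Hstr a⟩, rfl⟩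
  have hinv : (Hstr a)⁻¹ = Hstr a := Matrix.inv_eq_right_inv (Hstr_mul_Hstr a)
  have key : θ • (Complex.I • Pstr (t + a)) =
      Hstr a * (θ • (Complex.I • Pstr t)) * (Hstr a)⁻¹ := by
    rw [hinv, ← Hstr_conj_Pstr a t]
    simp [Matrix.smul_mul, Matrix.mul_smul]
  rw [key]
  have := Matrix.exp_conj (Hstr a) (θ • Complex.I • Pstr t) hu
  rw [this, hinv]
end
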